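/- Fix n ≥ 2 and distinct indices i, j ∈ {1,…,n}. Let G = Zⁿ ⋊_φ (Z/2Z) be the semidirect product where the nontrivial element of Z/2Z acts on Zⁿ by swapping the standard generators x_i and x_j and fixing x_k for all k ∉ {i,j}. Then for every finite symmetric generating set A of G, there exist a, b ∈ A such that the three-letter word a·b·a⁻¹ is geodesic; consequently the geodesic language Geo(G,A) is not piecewise excluding. -/

import Mathlib

/-- `w` is a word over the alphabet `A`: every letter of `w` lies in `A`. -/
def IsWordOver {G : Type*} (A : Finset G) (w : List G) : Prop :=
  ∀ x ∈ w, x ∈ A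

/-- `A` is a finite symmetric (inverse-closed) generating set of the group `G`. -/
def IsSymmGen {G : Type*} [Group G] (A : Finset G) : Prop :=
  Subgroup.closure (A : Set G) = ⊤ ∧ ∀ a ∈ A, a⁻¹ ∈ A

/-- `w` is a geodesic word over `A`: no word over `A` of strictly smaller length
evaluates to the same element of `G`. -/
def IsGeodesic {G : Type*} [Group G] (A : Finset G) (w : List G) : Prop :=
  IsWordOver A w ∧
    ∀ v : List G, IsWordOver A v → v.prod = w.prod → w.length ≤ v.length

/-- The geodesic language of `G` over `A`. -/
def Geo {G : Type*} [Group G] (A : Finset G) : Set (List G) :=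
  {w | IsGeodesic A w}

/-- A language `L` of words over `A` is piecewise excluding if there is a finite set `F`
of words over `A` such that a word `w` over `A` lies in `L` iff no element of `F` is a
piecewise subword (i.e. a not-necessarily-contiguous subsequence) of `w`. -/
def PiecewiseExcluding {G : Type*} (A : Finset G) (L : Set (List G)) : Prop :=
  ∃ F : Finset (List G), (∀ u ∈ F, IsWordOver A u) ∧
    ∀ w : List G, IsWordOver A w → (w ∈ L ↔ ∀ u ∈ F, ¬ List.Sublist u w)

/-- A monoid homomorphism `ℤ/2ℤ →* MulAut N` determined by an involutive automorphism. -/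
def phiOfInvolution {N : Type*} [Group N] (σ : MulAut N) (hσ : σ * σ = 1) :
    Multiplicative (ZMod 2) →* MulAut N where
  toFun z := σ ^ (Multiplicative.toAdd z).val
  map_one' := by
    show σ ^ (0 : ZMod 2).val = 1
    simp
  map_mul' x y := by
    have h2 : σ ^ 2 = 1 := by rw [pow_two]; exact hσ
    have key : ∀ m : ℕ, σ ^ m = σ ^ (m % 2) := by
      intro m
      conv_lhs => rw [← Nat.div_add_mod m 2]
      rw [pow_add, pow_mul, h2, one_pow, one_mul]
    show σ ^ ((Multiplicative.toAdd x) + (Multiplicative.toAdd y)).val = _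
    rw [ZMod.val_add, ← key, pow_add]

/-- The automorphism of `ℤⁿ` swapping the `i`-th and `j`-th coordinates (interchanging
the `i`-th and `j`-th standard generators and fixing the others). -/
def swapAddAut (n : ℕ) (i j : Fin n) : (Fin n → ℤ) ≃+ (Fin n → ℤ) where
  toFun v := v ∘ Equiv.swap i j
  invFun v := v ∘ Equiv.swap i j
  left_inv v := by funext k; simp
  right_inv v := by funext k; simp
  map_add' v w := rfl

/-- The action of `ℤ/2ℤ` on `ℤⁿ` whose nontrivial element swaps the `i`-th and `j`-th
standard generators and fixes the others. -/
def phiSwap (n : ℕ) (i j : Fin n) :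
    Multiplicative (ZMod 2) →* MulAut (Multiplicative (Fin n → ℤ)) :=
  phiOfInvolution (AddEquiv.toMultiplicative (swapAddAut n i j))
    (by
      refine MulEquiv.ext fun v => ?_
      show Multiplicative.ofAdd
          (swapAddAut n i j (swapAddAut n i j (Multiplicative.toAdd v))) = v
      have h : ∀ w : Fin n → ℤ, swapAddAut n i j (swapAddAut n i j w) = w := by
        intro w; funext k; simp [swapAddAut]
      rw [h]; rfl)

/-!
The map `(v, ε) ↦ (vᵢ - vⱼ, ε)` is a surjection of `G` onto the infinite dihedral group `D∞`,
the image of a finite symmetric generating set is again one, and a word whose image is geodesic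
is itself geodesic, so it suffices to work in `D∞`. There, let `M₀` and `M₁` be the largest
displacements of the rotations and of the reflections in the generating set `B`. A reflection
that is a product of at most two letters of `B` has displacement at most `M₀ + M₁`. Conjugating a
reflection of maximal displacement by a rotation of maximal displacement and suitable sign, or,
if all rotations in `B` are trivial, conjugating another reflection by it, gives a reflection of
larger displacement; hence `a b a⁻¹` is geodesic. Its piecewise subword `a a⁻¹` is not, which is
impossible in a piecewise excluding language.
-/

open DihedralGroup

section Words

variable {G H : Type*} [Group G] [Group H]

theorem IsWordOver.sublist {α : Type*} {A : Finset α} {u w : List α} (hw : IsWordOver A w)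
    (h : u.Sublist w) : IsWordOver A u :=
  fun x hx => hw x (h.subset hx)

theorem IsWordOver.map [DecidableEq H] {A : Finset G} {w : List G} (hw : IsWordOver A w)
    (f : G →* H) : IsWordOver (A.image f) (w.map f) := by
  intro x hx
  obtain ⟨y, hy, rfl⟩ := List.mem_map.1 hx
  exact Finset.mem_image_of_mem f (hw y hy)

theorem IsGeodesic.of_map [DecidableEq H] (f : G →* H) {A : Finset G} {w : List G}
    (hw : IsWordOver A w) (h : IsGeodesic (A.image f) (w.map f)) : IsGeodesic A w := by
  refine ⟨hw, fun v hv hvw => ?_⟩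
  simpa using h.2 (v.map f) (hv.map f) (by simp only [← map_list_prod, hvw])

theorem isGeodesic_of_three_of_ne {A : Finset G} {a b c : G} (hw : IsWordOver A [a, b, c])
    (h₀ : a * b * c ≠ 1) (h₁ : ∀ x ∈ A, x ≠ a * b * c)
    (h₂ : ∀ x ∈ A, ∀ y ∈ A, x * y ≠ a * b * c) : IsGeodesic A [a, b, c] := by
  refine ⟨hw, fun v hv hprod => ?_⟩
  match v, hv, hprod with
  | [], _, h => exact absurd (by simpa [mul_assoc] using h.symm) h₀
  | [x], hv, h => exact absurd (by simpa [mul_assoc] using h) (h₁ x (hv x (by simp)))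
  | [x, y], hv, h =>
    exact absurd (by simpa [mul_assoc] using h) (h₂ x (hv x (by simp)) y (hv y (by simp)))
  | _ :: _ :: _ :: _, _, _ => simp

theorem not_isGeodesic_mul_inv (A : Finset G) (a : G) : ¬ IsGeodesic A [a, a⁻¹] :=
  fun h => by simpa using h.2 [] (fun _ => by simp) (by simp)

theorem PiecewiseExcluding.mem_of_sublist {α : Type*} {A : Finset α} {L : Set (List α)}
    (hL : PiecewiseExcluding A L) {u w : List α} (hw : IsWordOver A w) (hwL : w ∈ L)
    (huw : u.Sublist w) : u ∈ L := by
  obtain ⟨F, -, hF⟩ := hL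
  exact (hF u (hw.sublist huw)).2 fun v hv hvu => (hF w hw).1 hwL v hv (hvu.trans huw)

theorem not_piecewiseExcluding_geo_of_isGeodesic {A : Finset G} {a b : G}
    (h : IsGeodesic A [a, b, a⁻¹]) : ¬ PiecewiseExcluding A (Geo A) := fun hL =>
  not_isGeodesic_mul_inv A a (hL.mem_of_sublist h.1 h (by simp))

theorem IsSymmGen.image [DecidableEq H] {A : Finset G} (hA : IsSymmGen A) {f : G →* H}
    (hf : Function.Surjective f) : IsSymmGen (A.image f) := by
  refine ⟨?_, ?_⟩
  · rw [Finset.coe_image, ← MonoidHom.map_closure, hA.1, ← MonoidHom.range_eq_map,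
      MonoidHom.range_eq_top.2 hf]
  · simp only [Finset.mem_image]
    rintro _ ⟨a, ha, rfl⟩
    exact ⟨a⁻¹, hA.2 a ha, map_inv f a⟩

end Words

theorem Int.natAbs_lt_natAbs_sub_sub {a b : ℤ} (h : b.natAbs ≤ a.natAbs) (hne : b ≠ a) :
    a.natAbs < (a - (b - a)).natAbs := by
  omega

theorem Int.exists_natAbs_sub_add_neg_eq (a b : ℤ) :
    ∃ c, (c = b ∨ c = -b) ∧ (a - c + -c).natAbs = a.natAbs + 2 * b.natAbs := by
  by_cases h : (a - b + -b).natAbs = a.natAbs + 2 * b.natAbs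
  · exact ⟨b, .inl rfl, h⟩
  · exact ⟨-b, .inr rfl, by omega⟩

namespace DihedralGroup

variable {n : ℕ}

theorem exists_sr_mem_of_closure_eq_top {B : Set (DihedralGroup n)}
    (hB : Subgroup.closure B = ⊤) : ∃ j, sr j ∈ B := by
  by_contra! h
  have hrot : ∀ g ∈ Subgroup.closure B, ∃ i, g = r i := by
    intro g hg
    induction hg using Subgroup.closure_induction with
    | mem x hx => cases x with
      | r i => exact ⟨i, rfl⟩
      | sr j => exact absurd hx (h j)
    | one => exact ⟨0, rfl⟩
    | mul _ _ _ _ hx hy =>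
      obtain ⟨i, rfl⟩ := hx
      obtain ⟨i', rfl⟩ := hy
      exact ⟨i + i', r_mul_r i i'⟩
    | inv _ _ hx =>
      obtain ⟨i, rfl⟩ := hx
      exact ⟨-i, inv_r i⟩
  obtain ⟨i, hi⟩ := hrot (sr 0) (hB ▸ Subgroup.mem_top _)
  cases hi

theorem exists_sr_mem_ne_of_closure_eq_top [Nontrivial (ZMod n)] {B : Set (DihedralGroup n)}
    (hB : Subgroup.closure B = ⊤) (hr : ∀ i, r i ∈ B → i = 0) (j : ZMod n) :
    ∃ j', sr j' ∈ B ∧ j' ≠ j := by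
  by_contra! h
  have hsmall : ∀ g ∈ Subgroup.closure B, g = 1 ∨ g = sr j := by
    intro g hg
    induction hg using Subgroup.closure_induction with
    | mem x hx => cases x with
      | r i => exact .inl (by rw [hr i hx, r_zero])
      | sr j' => exact .inr (by rw [h j' hx])
    | one => exact .inl rfl
    | mul _ _ _ _ hx hy =>
      rcases hx with rfl | rfl <;> rcases hy with rfl | rfl <;> simp
    | inv _ _ hx => rcases hx with rfl | rfl <;> simp
  rcases hsmall (r 1) (hB ▸ Subgroup.mem_top _) with h1 | h1
  · exact one_ne_zero (r.inj h1)
  · cases h1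

/- `ZMod 0` is `ℤ` by definition: integer lemmas apply to the indices of `DihedralGroup 0` through
this unfolding, and `Int.natAbs` is wrapped as a function on `ZMod 0` wherever it is passed to
`Finset.sup` or `Finset.exists_max_image`, to keep those terms well typed. -/

theorem natAbs_le_of_mul_eq_sr {B : Set (DihedralGroup 0)} {M₀ M₁ : ℕ}
    (hr : ∀ i, r i ∈ B → Int.natAbs i ≤ M₀) (hs : ∀ j, sr j ∈ B → Int.natAbs j ≤ M₁)
    {x y : DihedralGroup 0} (hx : x ∈ B) (hy : y ∈ B) {k : ZMod 0} (h : x * y = sr k) :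
    Int.natAbs k ≤ M₀ + M₁ := by
  cases x with
  | r i => cases y with
    | r _ => cases h
    | sr j =>
      rw [r_mul_sr, sr.injEq] at h
      subst h
      exact (Int.natAbs_sub_le j i).trans (by linarith [hr i hx, hs j hy])
  | sr i => cases y with
    | r j =>
      rw [sr_mul_r, sr.injEq] at h
      subst h
      exact (Int.natAbs_add_le i j).trans (by linarith [hs i hx, hr j hy])
    | sr _ => cases h

theorem isGeodesic_of_conj_eq_sr {B : Finset (DihedralGroup 0)} {M₀ M₁ : ℕ}
    (hr : ∀ i, r i ∈ B → Int.natAbs i ≤ M₀) (hs : ∀ j, sr j ∈ B → Int.natAbs j ≤ M₁)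
    (hinv : ∀ g ∈ B, g⁻¹ ∈ B) {a b : DihedralGroup 0} (ha : a ∈ B) (hb : b ∈ B) {k : ZMod 0}
    (hk : a * b * a⁻¹ = sr k) (hlt : M₀ + M₁ < Int.natAbs k) : IsGeodesic B [a, b, a⁻¹] := by
  refine isGeodesic_of_three_of_ne (by simp [IsWordOver, ha, hb, hinv a ha]) (by rw [hk]; nofun)
    (fun x hx hxk => ?_) (fun x hx y hy hxy => ?_)
  · rw [hk] at hxk
    subst hxk
    exact absurd (hs k hx) (by omega)
  · exact absurd (natAbs_le_of_mul_eq_sr hr hs hx hy (hxy.trans hk)) (by omega)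

theorem exists_isGeodesic_conj {B : Finset (DihedralGroup 0)} (hB : IsSymmGen B) :
    ∃ a ∈ B, ∃ b ∈ B, IsGeodesic B [a, b, a⁻¹] := by
  classical
  obtain ⟨hgen, hinv⟩ := hB
  set I := B.preimage r fun _ _ _ _ => r.inj
  set J := B.preimage sr fun _ _ _ _ => sr.inj
  set M₀ := I.sup fun i : ZMod 0 => Int.natAbs i
  obtain ⟨j₀, hj₀⟩ := exists_sr_mem_of_closure_eq_top hgen
  obtain ⟨j, hjJ, hjmax⟩ :=
    J.exists_max_image (fun j : ZMod 0 => Int.natAbs j) ⟨j₀, Finset.mem_preimage.2 hj₀⟩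
  have hjB : sr j ∈ B := Finset.mem_preimage.1 hjJ
  have hr : ∀ i, r i ∈ B → Int.natAbs i ≤ M₀ :=
    fun i hi => Finset.le_sup (f := fun i : ZMod 0 => Int.natAbs i) (Finset.mem_preimage.2 hi)
  have hs : ∀ j', sr j' ∈ B → Int.natAbs j' ≤ Int.natAbs j :=
    fun j' hj' => hjmax j' (Finset.mem_preimage.2 hj')
  rcases Nat.eq_zero_or_pos M₀ with h0 | hpos
  · have hr0 : ∀ i, r i ∈ B → i = 0 := fun i hi => Int.natAbs_eq_zero.1 (by linarith [hr i hi])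
    obtain ⟨j', hj'B, hne⟩ := exists_sr_mem_ne_of_closure_eq_top hgen hr0 j
    refine ⟨sr j, hjB, sr j', hj'B, isGeodesic_of_conj_eq_sr hr hs hinv hjB hj'B
      (k := j - (j' - j)) (by rw [sr_mul_sr, inv_sr, r_mul_sr]) ?_⟩
    rw [h0, zero_add]
    exact Int.natAbs_lt_natAbs_sub_sub (hs j' hj'B) hne
  · have hI : I.Nonempty := Finset.nonempty_iff_ne_empty.2 fun h => by simp [M₀, h] at hpos
    obtain ⟨i, hiI, hi⟩ := I.exists_mem_eq_sup hI fun i : ZMod 0 => Int.natAbs i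
    obtain ⟨c, hc, hc_abs⟩ : ∃ c : ZMod 0, (c = i ∨ c = -i) ∧
        Int.natAbs (j - c + -c) = Int.natAbs j + 2 * Int.natAbs i :=
      Int.exists_natAbs_sub_add_neg_eq j i
    have hcB : r c ∈ B := by
      have hiB : r i ∈ B := Finset.mem_preimage.1 hiI
      rcases hc with rfl | rfl
      exacts [hiB, by simpa using hinv _ hiB]
    exact ⟨r c, hcB, sr j, hjB, isGeodesic_of_conj_eq_sr hr hs hinv hcB hjB (k := j - c + -c)
      (by rw [r_mul_sr, inv_r, sr_mul_r]) (lt_of_lt_of_eq (by omega) hc_abs.symm)⟩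

end DihedralGroup

theorem exists_isGeodesic_conj_of_surjective_dihedral {G : Type*} [Group G]
    {f : G →* DihedralGroup 0} (hf : Function.Surjective f) {A : Finset G} (hA : IsSymmGen A) :
    ∃ a ∈ A, ∃ b ∈ A, IsGeodesic A [a, b, a⁻¹] := by
  obtain ⟨_, ha, _, hb, hgeo⟩ := DihedralGroup.exists_isGeodesic_conj (hA.image hf)
  obtain ⟨a, haA, rfl⟩ := Finset.mem_image.1 ha
  obtain ⟨b, hbA, rfl⟩ := Finset.mem_image.1 hb
  refine ⟨a, haA, b, hbA, IsGeodesic.of_map f ?_ (by simpa using hgeo)⟩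
  simp [IsWordOver, haA, hbA, hA.2 a haA]

section SwapDihedral

variable (n : ℕ) (i j : Fin n)

-- The cast is explicit: otherwise `ℤ` is accepted as `ZMod 0` by unfolding, and the simp lemmas
-- of `DihedralGroup` no longer match.
def swapDiffHom : Multiplicative (Fin n → ℤ) →* DihedralGroup 0 where
  toFun v := r (Int.cast (Multiplicative.toAdd v i - Multiplicative.toAdd v j))
  map_one' := by simp
  map_mul' v w := by
    rw [r_mul_r, ← Int.cast_add]
    congr 2
    simp only [toAdd_mul, Pi.add_apply]
    ring

def zmodTwoToDihedral : Multiplicative (ZMod 2) →* DihedralGroup 0 where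
  toFun z := sr 0 ^ (Multiplicative.toAdd z).val
  map_one' := rfl
  map_mul' := by decide

theorem zmodTwoToDihedral_ofAdd_one : zmodTwoToDihedral (Multiplicative.ofAdd 1) = sr 0 :=
  rfl

theorem phiSwap_ofAdd_one_apply (v : Multiplicative (Fin n → ℤ)) :
    phiSwap n i j (Multiplicative.ofAdd 1) v =
      Multiplicative.ofAdd (Multiplicative.toAdd v ∘ Equiv.swap i j) :=
  rfl

def swapToDihedral :
    (Multiplicative (Fin n → ℤ)) ⋊[phiSwap n i j] Multiplicative (ZMod 2) →* DihedralGroup 0 :=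
  SemidirectProduct.lift (swapDiffHom n i j) zmodTwoToDihedral fun z => by
    obtain ⟨z, rfl⟩ := Multiplicative.ofAdd.surjective z
    refine MonoidHom.ext fun v => ?_
    obtain rfl | rfl : z = 0 ∨ z = 1 := by decide +revert
    · simp
    · simp [zmodTwoToDihedral_ofAdd_one, phiSwap_ofAdd_one_apply, swapDiffHom, MulAut.conj_apply]

variable {n i j} in
theorem swapToDihedral_surjective (hij : i ≠ j) : Function.Surjective (swapToDihedral n i j) := by
  have hrot : ∀ k : ℤ, swapToDihedral n i j
      (SemidirectProduct.inl (Multiplicative.ofAdd (Pi.single i k))) = r (Int.cast k) := by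
    simp [swapToDihedral, swapDiffHom, Pi.single_eq_of_ne hij.symm]
  rintro (k | k) <;> obtain ⟨k, rfl⟩ := ZMod.intCast_surjective k
  · exact ⟨_, hrot k⟩
  · refine ⟨SemidirectProduct.inl (Multiplicative.ofAdd (Pi.single i (-k))) *
      SemidirectProduct.inr (Multiplicative.ofAdd 1), ?_⟩
    rw [map_mul, hrot, swapToDihedral, SemidirectProduct.lift_inr, zmodTwoToDihedral_ofAdd_one,
      r_mul_sr]
    simp

end SwapDihedral

theorem zn_semidirect_swap_not_piecewise_excluding_general (n : ℕ)
    (i j : Fin n) (hij : i ≠ j)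
    (A : Finset ((Multiplicative (Fin n → ℤ)) ⋊[phiSwap n i j] Multiplicative (ZMod 2)))
    (hA : IsSymmGen A) :
    (∃ a ∈ A, ∃ b ∈ A, IsGeodesic A [a, b, a⁻¹]) ∧
    ¬ PiecewiseExcluding A (Geo A) := by
  obtain ⟨a, ha, b, hb, hgeo⟩ :=
    exists_isGeodesic_conj_of_surjective_dihedral (swapToDihedral_surjective hij) hA
  exact ⟨⟨a, ha, b, hb, hgeo⟩, not_piecewiseExcluding_geo_of_isGeodesic hgeo⟩

/-- For `G = ℤⁿ ⋊ ℤ/2ℤ`, where the nontrivial element of `ℤ/2ℤ` swaps the `i`-th and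
`j`-th standard generators of `ℤⁿ` (for `i ≠ j`) and fixes the others, every finite
symmetric generating set `A` of `G` admits `a, b ∈ A` with `a·b·a⁻¹` geodesic; hence
`Geo(G,A)` is not piecewise excluding. -/
theorem zn_semidirect_swap_not_piecewise_excluding (n : ℕ) (hn : 2 ≤ n)
    (i j : Fin n) (hij : i ≠ j)
    (A : Finset ((Multiplicative (Fin n → ℤ)) ⋊[phiSwap n i j] Multiplicative (ZMod 2)))
    (hA : IsSymmGen A) :
    (∃ a ∈ A, ∃ b ∈ A, IsGeodesic A [a, b, a⁻¹]) ∧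
    ¬ PiecewiseExcluding A (Geo A) :=
  zn_semidirect_swap_not_piecewise_excluding_general n i j hij A hA
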